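/- arXiv:1705.06379 — 3 statements merged into one kernel-verified Lean document; each statement's English description precedes it below -/
import Mathlib

section
/- ε-complementary slackness error bound: if f is a feasible flow and p a price vector such that f_{ij} > 0 implies max_{k ∈ A(i)} (c_{ik} − p_k) − ε ≤ c_{ij} − p_j, then the cost of f is within Lε of the optimal primal cost, where L = sum_i d_i; that is, P* ≤ sum_{(i,j)} c_{ij} f_{ij} + L ε. -/
open Finset

/-- A feasible flow for the discrete transport problem. -/
def Feasible (M N : ℕ) (d : Fin M → ℝ) (s : Fin N → ℝ)
    (A : Fin M → Finset (Fin N)) (f : Fin M → Fin N → ℝ) : Prop :=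
  (∀ i j, 0 ≤ f i j) ∧
  (∀ i j, j ∉ A i → f i j = 0) ∧
  (∀ i, ∑ j ∈ A i, f i j = d i) ∧
  (∀ j, ∑ i, f i j = s j)

/-- ε-complementary slackness error bound: a feasible flow satisfying ε-CS
with some price vector has cost within `L ε` of the optimal primal cost. -/
theorem stmt_4 (M N : ℕ) (d : Fin M → ℝ) (s : Fin N → ℝ)
    (A : Fin M → Finset (Fin N)) (c : Fin M → Fin N → ℝ)
    (p : Fin N → ℝ) (f : Fin M → Fin N → ℝ) (ε : ℝ) (Pstar : ℝ)
    (hA : ∀ i, (A i).Nonempty)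
    (hd : ∀ i, 0 < d i) (hs : ∀ j, 0 < s j)
    (hL : ∑ i, d i = ∑ j, s j)
    (hε : 0 < ε)
    (hfeas : Feasible M N d s A f)
    (heCS : ∀ i, ∀ j ∈ A i, 0 < f i j →
      (A i).sup' (hA i) (fun k => c i k - p k) - ε ≤ c i j - p j)
    (hPstar : IsGreatest
      {x : ℝ | ∃ g, Feasible M N d s A g ∧ ∑ i, ∑ j ∈ A i, c i j * g i j = x}
      Pstar) :
    Pstar ≤ (∑ i, ∑ j ∈ A i, c i j * f i j) + (∑ i, d i) * ε := by
  obtain ⟨⟨g, hg, hgval⟩, -⟩ := hPstar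
  set Mx : Fin M → ℝ := fun i => (A i).sup' (hA i) (fun k => c i k - p k) with hMx
  -- key: for any feasible h, ∑ i ∑ j∈A i, p j * h i j = ∑ j, s j * p j
  have key : ∀ (h : Fin M → Fin N → ℝ), Feasible M N d s A h →
      ∑ i, ∑ j ∈ A i, p j * h i j = ∑ j, s j * p j := by
    intro h hh
    have h1 : ∀ i, ∑ j ∈ A i, p j * h i j = ∑ j, p j * h i j := by
      intro i
      exact (Finset.sum_subset (f := fun j => p j * h i j) (Finset.subset_univ _)
        (fun j _ hj => by show p j * h i j = 0; rw [hh.2.1 i j hj, mul_zero]))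
    rw [show (∑ i, ∑ j ∈ A i, p j * h i j) = ∑ i, ∑ j, p j * h i j from
      Finset.sum_congr rfl fun i _ => h1 i, Finset.sum_comm]
    refine Finset.sum_congr rfl fun j _ => ?_
    rw [← Finset.mul_sum, hh.2.2.2 j, mul_comm]
  have split : ∀ (h : Fin M → Fin N → ℝ),
      (∑ i, ∑ j ∈ A i, c i j * h i j)
        = (∑ i, ∑ j ∈ A i, (c i j - p j) * h i j) + ∑ i, ∑ j ∈ A i, p j * h i j := by
    intro h
    rw [← Finset.sum_add_distrib]
    refine Finset.sum_congr rfl fun i _ => ?_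
    rw [← Finset.sum_add_distrib]
    exact Finset.sum_congr rfl fun j _ => by ring
  -- weak duality for g
  have dual_ub : (∑ i, ∑ j ∈ A i, c i j * g i j)
      ≤ (∑ i, d i * Mx i) + ∑ j, s j * p j := by
    rw [split g, key g hg]
    gcongr with i _
    calc ∑ j ∈ A i, (c i j - p j) * g i j ≤ ∑ j ∈ A i, Mx i * g i j := by
          refine Finset.sum_le_sum fun j hj => ?_
          exact mul_le_mul_of_nonneg_right (Finset.le_sup' (fun k => c i k - p k) hj) (hg.1 i j)
      _ = d i * Mx i := by rw [← Finset.mul_sum, hg.2.2.1 i, mul_comm]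
  -- ε-CS bound for f
  have dual_lb : (∑ i, d i * Mx i) + ∑ j, s j * p j
      ≤ (∑ i, ∑ j ∈ A i, c i j * f i j) + (∑ i, d i) * ε := by
    have step : ∀ i, d i * Mx i ≤ (∑ j ∈ A i, (c i j - p j) * f i j) + d i * ε := by
      intro i
      have : ∑ j ∈ A i, Mx i * f i j ≤ ∑ j ∈ A i, (c i j - p j + ε) * f i j := by
        refine Finset.sum_le_sum fun j hj => ?_
        rcases lt_or_eq_of_le (hfeas.1 i j) with hpos | hzero
        · have := heCS i j hj hpos
          nlinarith
        · rw [← hzero, mul_zero, mul_zero]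
      calc d i * Mx i = ∑ j ∈ A i, Mx i * f i j := by
            rw [← Finset.mul_sum, hfeas.2.2.1 i, mul_comm]
        _ ≤ ∑ j ∈ A i, (c i j - p j + ε) * f i j := this
        _ = (∑ j ∈ A i, (c i j - p j) * f i j) + ε * ∑ j ∈ A i, f i j := by
            rw [Finset.mul_sum, ← Finset.sum_add_distrib]
            exact Finset.sum_congr rfl fun j _ => by ring
        _ = (∑ j ∈ A i, (c i j - p j) * f i j) + d i * ε := by
            rw [hfeas.2.2.1 i, mul_comm]
    calc (∑ i, d i * Mx i) + ∑ j, s j * p j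
        ≤ (∑ i, ((∑ j ∈ A i, (c i j - p j) * f i j) + d i * ε)) + ∑ j, s j * p j := by
          gcongr; exact step _
      _ = ((∑ i, ∑ j ∈ A i, (c i j - p j) * f i j) + ∑ i, ∑ j ∈ A i, p j * f i j)
            + (∑ i, d i) * ε := by
          rw [Finset.sum_add_distrib, key f hfeas, Finset.sum_mul]
          ring
      _ = (∑ i, ∑ j ∈ A i, c i j * f i j) + (∑ i, d i) * ε := by rw [← split f]
  calc Pstar = ∑ i, ∑ j ∈ A i, c i j * g i j := hgval.symm
    _ ≤ _ := dual_ub.trans dual_lb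
end

section
/- One step of the general auction preserves ε-complementary slackness: suppose (T, p) satisfies ε-CS, sink i bids on lot j* with bid price b = c_{ij*} − w + ε where w = max_{j∈A(i), j≠j*}(c_{ij} − p_j) and j* = argmax_{j∈A(i)}(c_{ij} − p_j), and the new price vector p' satisfies p_j ≤ p'_j for all j and p'_{j*} ≤ b. Then the new claim (i, j*) satisfies ε-CS with respect to p': c_{ij*} − p'_{j*} ≥ max_{j∈A(i)}(c_{ij} − p'_j) − ε. Moreover, every pair (k, j) that satisfied ε-CS under p with p'_j = p_j still satisfies ε-CS under p'. -/
open Finset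

/-- One step of the general auction preserves ε-complementary slackness.
Sink `i` bids on its best lot `jstar` with bid price `b = c i jstar - w + ε`,
where `w` bounds the expense of every other lot (the second-best expense).
Prices are nondecreasing (`p j ≤ p' j`) and the new price of `jstar` does
not exceed the bid (`p' jstar ≤ b`). Then the new claim `(i, jstar)`
satisfies ε-CS under `p'`, and any pair `(k, j)` that satisfied ε-CS under
`p` with `p' j = p j` still satisfies ε-CS under `p'`. -/
theorem stmt_7 (M N : ℕ) (A : Fin M → Finset (Fin N))
    (c : Fin M → Fin N → ℝ) (p p' : Fin N → ℝ) (ε : ℝ)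
    (hA : ∀ i, (A i).Nonempty) (hε : 0 < ε)
    (i : Fin M) (jstar : Fin N) (hjs : jstar ∈ A i)
    (hmax : ∀ j ∈ A i, c i j - p j ≤ c i jstar - p jstar)
    (w : ℝ)
    (hw_ub : ∀ j ∈ A i, j ≠ jstar → c i j - p j ≤ w)
    (hw_le : w ≤ c i jstar - p jstar)
    (b : ℝ) (hb : b = c i jstar - w + ε)
    (hmono : ∀ j, p j ≤ p' j)
    (hpb : p' jstar ≤ b) :
    (c i jstar - p' jstar ≥ (A i).sup' (hA i) (fun j => c i j - p' j) - ε) ∧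
    (∀ k : Fin M, ∀ j ∈ A k,
      (c k j - p j ≥ (A k).sup' (hA k) (fun l => c k l - p l) - ε) →
      p' j = p j →
      c k j - p' j ≥ (A k).sup' (hA k) (fun l => c k l - p' l) - ε) := by
  constructor
  · rw [ge_iff_le, sub_le_iff_le_add, Finset.sup'_le_iff]
    intro j hj
    by_cases h : j = jstar
    · subst h; linarith
    · have h1 := hw_ub j hj h
      have h2 := hmono j
      have : c i jstar - p' jstar ≥ w - ε := by
        have := hpb; rw [hb] at this; linarith
      linarith
  · intro k j hj hcs hpj
    rw [hpj]
    refine le_trans ?_ hcs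
    apply sub_le_sub_right
    apply Finset.sup'_le
    intro l hl
    refine le_trans ?_ (Finset.le_sup' _ hl)
    have := hmono l; simp; linarith
end

section
/- In the termination argument for the general auction, the set I^∞ of bidders who bid infinitely often on lots with unbounded prices satisfies A(i) ⊆ J^∞ for all i ∈ I^∞: if some lot adjacent to bidder i has bounded price, then i bids only finitely often on unbounded-price lots. -/
open Filter Finset

/-- If bidder `i` bids infinitely often on lots whose prices tend to +∞
(`i ∈ I^∞`), then every lot adjacent to `i` has price tending to +∞
(`A i ⊆ J^∞`). Bids are modeled by `B n i = some j`, meaning that at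
iteration `n` bidder `i` bids on lot `j`, which must maximize the expense
`c i k - p n k` over `k ∈ A i`; prices are nondecreasing. -/
theorem stmt_13 (M N : ℕ) (A : Fin M → Finset (Fin N))
    (c : Fin M → Fin N → ℝ) (p : ℕ → Fin N → ℝ)
    (B : ℕ → Fin M → Option (Fin N))
    (hA : ∀ i, (A i).Nonempty)
    (hmono : ∀ j, Monotone fun n => p n j)
    (hbid : ∀ n i j, B n i = some j →
      j ∈ A i ∧ ∀ k ∈ A i, c i k - p n k ≤ c i j - p n j) :
    ∀ i : Fin M,
      {n : ℕ | ∃ j, B n i = some j ∧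
        Tendsto (fun m => p m j) atTop atTop}.Infinite →
      ∀ j ∈ A i, Tendsto (fun m => p m j) atTop atTop := by
  intro i hS j₀ hj₀
  by_contra hnot
  -- A monotone sequence that does not tend to +∞ is bounded above.
  rw [tendsto_atTop_atTop_iff_of_monotone (hmono j₀)] at hnot
  push_neg at hnot
  obtain ⟨C, hC⟩ := hnot
  set D : ℝ := ((A i).sup' (hA i) fun k => c i k) - c i j₀ + C with hD
  -- Eventually, every adjacent lot with unbounded price has price above D.
  have hev : ∀ᶠ n in atTop, ∀ k ∈ A i,
      Tendsto (fun m => p m k) atTop atTop → D < p n k := by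
    rw [eventually_all_finset]
    intro k _
    by_cases hk : Tendsto (fun m => p m k) atTop atTop
    · filter_upwards [hk.eventually_gt_atTop D] with n hn _
      exact hn
    · filter_upwards with n h; exact absurd h hk
  obtain ⟨n₀, hn₀⟩ := eventually_atTop.mp hev
  obtain ⟨n, hnS, hn⟩ := hS.exists_gt n₀
  obtain ⟨j, hB, htend⟩ := hnS
  obtain ⟨hjA, hmax⟩ := hbid n i j hB
  have h1 : D < p n j := hn₀ n hn.le j hjA htend
  have h2 : c i j₀ - p n j₀ ≤ c i j - p n j := hmax j₀ hj₀
  have h3 : c i j ≤ (A i).sup' (hA i) fun k => c i k := le_sup' _ hjA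
  have h4 : p n j₀ < C := hC n
  linarith
end
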